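/- Let g : ℝⁿ → ℝ be a convex function and let v ∈ ℝⁿ. Then for every nonnegative smooth compactly supported function φ : ℝⁿ → ℝ, the integral ∫_{ℝⁿ} g(y) · D²φ(y)(v, v) dy ≥ 0, where D²φ(y)(v, v) = Σ_{i,j} vᵢ vⱼ ∂ᵢ∂ⱼφ(y) is the second directional derivative of φ at y in direction v. -/

import Mathlib

open MeasureTheory Set Topology Filter

lemma iterW {s : Set ℝ} (hs : UniqueDiffOn ℝ s) {ψ : ℝ → ℝ} (hψ : ContDiff ℝ (⊤ : ℕ∞) ψ)
    (n : ℕ) {x : ℝ} (hx : x ∈ s) :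
    iteratedDerivWithin n ψ s x = iteratedDeriv n ψ x := by
  induction n generalizing x with
  | zero => simp
  | succ k ih =>
    rw [iteratedDerivWithin_succ, iteratedDeriv_succ]
    rw [derivWithin_congr (fun y hy => ih hy) (ih hx)]
    refine DifferentiableAt.derivWithin ?_ (hs x hx)
    rw [iteratedDeriv_eq_iterate]
    exact ((hψ.iterate_deriv k).differentiable (by simp)) x

lemma taylor2_pos {ψ : ℝ → ℝ} (hψ : ContDiff ℝ (⊤ : ℕ∞) ψ) {h : ℝ} (hh : 0 < h) :
    ∃ ξ, |ξ| ≤ h ∧ ψ h - ψ 0 - deriv ψ 0 * h = deriv (deriv ψ) ξ * h ^ 2 / 2 := by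
  have hud : UniqueDiffOn ℝ (Icc (0:ℝ) h) := uniqueDiffOn_Icc hh
  have hdiff : ∀ n : ℕ, Differentiable ℝ (iteratedDeriv n ψ) := by
    intro n
    rw [iteratedDeriv_eq_iterate]
    exact (hψ.iterate_deriv n).differentiable (by simp)
  obtain ⟨ξ, hξ, hval⟩ := taylor_mean_remainder_lagrange (n := 1) hh.ne
    ((hψ.of_le (by exact_mod_cast le_top)).contDiffOn)
    (by
      rw [uIcc_of_le hh.le, uIoo_of_le hh.le]
      intro y hy
      refine (hdiff 1 y).differentiableWithinAt.congr
        (fun z hz => iterW hud hψ 1 (Ioo_subset_Icc_self hz))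
        (iterW hud hψ 1 (Ioo_subset_Icc_self hy)))
  rw [uIcc_of_le hh.le] at hval
  rw [uIoo_of_le hh.le] at hξ
  refine ⟨ξ, by rw [abs_le]; constructor <;> nlinarith [hξ.1, hξ.2], ?_⟩
  rw [iterW hud hψ 2 (Ioo_subset_Icc_self hξ)] at hval
  rw [taylorWithinEval_succ, taylor_within_zero_eval,
    iterW hud hψ 1 (left_mem_Icc.2 hh.le)] at hval
  simp only [iteratedDeriv_succ, iteratedDeriv_zero, iteratedDeriv_one] at hval ⊢
  norm_num [Nat.factorial] at hval
  linarith [hval]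

lemma taylor2_neg {ψ : ℝ → ℝ} (hψ : ContDiff ℝ (⊤ : ℕ∞) ψ) {h : ℝ} (hh : 0 < h) :
    ∃ ξ, |ξ| ≤ h ∧ ψ (-h) - ψ 0 + deriv ψ 0 * h = deriv (deriv ψ) ξ * h ^ 2 / 2 := by
  have hχ : ContDiff ℝ (⊤ : ℕ∞) (fun t => ψ (-t)) := hψ.comp contDiff_neg
  obtain ⟨ξ, hξ, hval⟩ := taylor2_pos hχ hh
  have hd1 : deriv (fun t => ψ (-t)) = fun t => -deriv ψ (-t) := by
    funext t; exact deriv_comp_neg ψ t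
  have hd2 : deriv (deriv (fun t => ψ (-t))) ξ = deriv (deriv ψ) (-ξ) := by
    rw [hd1]
    rw [show (fun t => -deriv ψ (-t)) = fun t => -(deriv ψ (-t)) from rfl]
    rw [show (fun t => -(deriv ψ (-t))) = -(fun t => deriv ψ (-t)) from rfl, deriv.neg']
    simp only [deriv_comp_neg, neg_neg]
  refine ⟨-ξ, by rwa [abs_neg], ?_⟩
  rw [hd2] at hval
  rw [hd1] at hval
  simp only [neg_zero] at hval
  linarith [hval]

lemma taylor2_sym {ψ : ℝ → ℝ} (hψ : ContDiff ℝ (⊤ : ℕ∞) ψ) {h : ℝ} (hh : 0 < h) :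
    ∃ ξ₁ ξ₂, |ξ₁| ≤ h ∧ |ξ₂| ≤ h ∧
      (ψ h - 2 * ψ 0 + ψ (-h)) / h ^ 2 =
        (deriv (deriv ψ) ξ₁ + deriv (deriv ψ) ξ₂) / 2 := by
  obtain ⟨ξ₁, h₁, e₁⟩ := taylor2_pos hψ hh
  obtain ⟨ξ₂, h₂, e₂⟩ := taylor2_neg hψ hh
  refine ⟨ξ₁, ξ₂, h₁, h₂, ?_⟩
  have h2 : h ^ 2 ≠ 0 := by positivity
  field_simp
  linarith [e₁, e₂]

section Vec
variable {E : Type*} [NormedAddCommGroup E] [NormedSpace ℝ E]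

lemma line_hasDerivAt (y v : E) (t : ℝ) : HasDerivAt (fun t : ℝ => y + t • v) v t := by
  simpa using ((hasDerivAt_id t).smul_const v).const_add y

lemma line_smooth (y v : E) : ContDiff ℝ (⊤ : ℕ∞) (fun t : ℝ => y + t • v) :=
  contDiff_const.add (contDiff_id.smul contDiff_const)

lemma deriv_line (φ : E → ℝ) (hφ : ContDiff ℝ (⊤ : ℕ∞) φ) (y v : E) :
    deriv (fun t : ℝ => φ (y + t • v)) = fun t => fderiv ℝ φ (y + t • v) v := by
  funext t
  exact (((hφ.differentiable (by simp)) (y + t • v)).hasFDerivAt.comp_hasDerivAt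
    t (line_hasDerivAt y v t)).deriv

lemma fderiv_apply_hasFDerivAt (φ : E → ℝ) (hφ : ContDiff ℝ (⊤ : ℕ∞) φ) (v z : E) :
    HasFDerivAt (fun w => fderiv ℝ φ w v)
      ((ContinuousLinearMap.apply ℝ ℝ v).comp (fderiv ℝ (fderiv ℝ φ) z)) z := by
  have h1 : ContDiff ℝ (⊤ : ℕ∞) (fderiv ℝ φ) := hφ.fderiv_right (by exact_mod_cast le_top)
  exact (ContinuousLinearMap.apply ℝ ℝ v).hasFDerivAt.comp z
    ((h1.differentiable (by simp)) z).hasFDerivAt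

lemma fderiv2_smooth (φ : E → ℝ) (hφ : ContDiff ℝ (⊤ : ℕ∞) φ) (v : E) :
    ContDiff ℝ (⊤ : ℕ∞) (fun w => fderiv ℝ φ w v) :=
  (hφ.fderiv_right (by exact_mod_cast le_top)).clm_apply contDiff_const

lemma deriv2_line (φ : E → ℝ) (hφ : ContDiff ℝ (⊤ : ℕ∞) φ) (y v : E) :
    deriv (deriv (fun t : ℝ => φ (y + t • v))) =
      fun t => fderiv ℝ (fun z => fderiv ℝ φ z v) (y + t • v) v := by
  rw [deriv_line φ hφ y v]
  funext t
  have h2 := fderiv_apply_hasFDerivAt φ hφ v (y + t • v)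
  rw [show (fun t : ℝ => fderiv ℝ φ (y + t • v) v) = ((fun w => fderiv ℝ φ w v) ∘ fun t => y + t • v) from rfl,
    (h2.comp_hasDerivAt t (line_hasDerivAt y v t)).deriv, h2.fderiv]

end Vec

lemma keyA (n : ℕ) (g φ : EuclideanSpace ℝ (Fin n) → ℝ)
    (hgc : Continuous g) (hg : ConvexOn ℝ Set.univ g)
    (hφc : Continuous φ) (hsupp : HasCompactSupport φ) (hnonneg : ∀ y, 0 ≤ φ y)
    (c : EuclideanSpace ℝ (Fin n)) :
    0 ≤ ∫ y, g y * (φ (y + c) - 2 * φ y + φ (y - c)) := by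
  have hsp : HasCompactSupport (fun y => φ (y + c)) := by
    simpa [Function.comp_def] using hsupp.comp_homeomorph (Homeomorph.addRight c)
  have hsm : HasCompactSupport (fun y => φ (y - c)) := by
    simpa [Function.comp_def] using hsupp.comp_homeomorph (Homeomorph.subRight c)
  have hcp : Continuous (fun y => φ (y + c)) := by fun_prop
  have hcm : Continuous (fun y => φ (y - c)) := by fun_prop
  have Ip : Integrable (fun y => g y * φ (y + c)) := by
    exact (hgc.mul hcp).integrable_of_hasCompactSupport (hsp.mul_left)
  have I0 : Integrable (fun y => g y * φ y) := by
    exact (hgc.mul hφc).integrable_of_hasCompactSupport (hsupp.mul_left)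
  have Im : Integrable (fun y => g y * φ (y - c)) := by
    exact (hgc.mul hcm).integrable_of_hasCompactSupport (hsm.mul_left)
  have Jp : Integrable (fun y => g (y - c) * φ y) := by
    exact ((hgc.comp (continuous_id.sub continuous_const)).mul hφc).integrable_of_hasCompactSupport
      (hsupp.mul_left)
  have Jm : Integrable (fun y => g (y + c) * φ y) := by
    exact ((hgc.comp (continuous_id.add continuous_const)).mul hφc).integrable_of_hasCompactSupport
      (hsupp.mul_left)
  have hf1 : Integrable (fun y => g y * φ (y + c) - 2 * (g y * φ y)) volume :=
    Ip.sub (I0.const_mul 2)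
  have hf2 : Integrable (fun y => g (y - c) * φ y - 2 * (g y * φ y)) volume :=
    Jp.sub (I0.const_mul 2)
  have split : ∫ y, g y * (φ (y + c) - 2 * φ y + φ (y - c)) =
      ((∫ y, g y * φ (y + c)) - 2 * ∫ y, g y * φ y) + ∫ y, g y * φ (y - c) := by
    rw [show (fun y => g y * (φ (y + c) - 2 * φ y + φ (y - c))) =
        fun y => (g y * φ (y + c) - 2 * (g y * φ y)) + g y * φ (y - c) by
      funext y; ring]
    rw [integral_add hf1 Im, integral_sub Ip (I0.const_mul 2),
      integral_const_mul]
  have Tp : ∫ y, g y * φ (y + c) = ∫ y, g (y - c) * φ y := by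
    have := integral_add_right_eq_self (μ := volume) (fun y => g (y - c) * φ y) c
    simp only [add_sub_cancel_right] at this
    exact this
  have Tm : ∫ y, g y * φ (y - c) = ∫ y, g (y + c) * φ y := by
    have := integral_sub_right_eq_self (μ := volume) (fun y => g (y + c) * φ y) c
    simp only [sub_add_cancel] at this
    exact this
  have recomb : ((∫ y, g (y - c) * φ y) - 2 * ∫ y, g y * φ y)
      + ∫ y, g (y + c) * φ y =
      ∫ y, (g (y - c) - 2 * g y + g (y + c)) * φ y := by
    rw [show (fun y => (g (y - c) - 2 * g y + g (y + c)) * φ y) =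
        fun y => (g (y - c) * φ y - 2 * (g y * φ y)) + g (y + c) * φ y by
      funext y; ring]
    rw [integral_add hf2 Jm, integral_sub Jp (I0.const_mul 2),
      integral_const_mul]
  rw [split, Tp, Tm, recomb]
  refine integral_nonneg fun y => mul_nonneg ?_ (hnonneg y)
  have hcvx := hg.2 (Set.mem_univ (y - c)) (Set.mem_univ (y + c))
    (by norm_num : (0:ℝ) ≤ 1/2) (by norm_num : (0:ℝ) ≤ 1/2) (by norm_num)
  have hmid : (1/2 : ℝ) • (y - c) + (1/2 : ℝ) • (y + c) = y := by module
  rw [hmid] at hcvx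
  simp only [smul_eq_mul] at hcvx
  linarith [hcvx]

/-- **The second distributional derivative of a convex function in a fixed direction is a
positive distribution.** For convex `g : ℝⁿ → ℝ`, any direction `v`, and any nonnegative
`φ ∈ C_c^∞(ℝⁿ)`, `∫ g(y) · D²φ(y)(v, v) dy ≥ 0`. -/
theorem convex_second_distributional_derivative_nonneg
    (n : ℕ) (g : EuclideanSpace ℝ (Fin n) → ℝ)
    (hg : ConvexOn ℝ Set.univ g)
    (v : EuclideanSpace ℝ (Fin n))
    (φ : EuclideanSpace ℝ (Fin n) → ℝ)
    (hφ : ContDiff ℝ (⊤ : ℕ∞) φ) (hsupp : HasCompactSupport φ)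
    (hnonneg : ∀ y, 0 ≤ φ y) :
    0 ≤ ∫ y, g y * fderiv ℝ (fun z => fderiv ℝ φ z v) y v := by
  classical
  have hφ' : ContDiff ℝ (⊤ : ℕ∞) φ := hφ.of_le (by simp)
  have hφc : Continuous φ := hφ'.continuous
  have hgc : Continuous g := continuousOn_univ.mp (hg.continuousOn isOpen_univ)
  set D : EuclideanSpace ℝ (Fin n) → ℝ :=
    fun z => fderiv ℝ (fun w => fderiv ℝ φ w v) z v with hDdef
  have hDsm : ContDiff ℝ (⊤ : ℕ∞) D := fderiv2_smooth _ (fderiv2_smooth φ hφ' v) v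
  have hDc : Continuous D := hDsm.continuous
  have hF : HasCompactSupport (fun w => fderiv ℝ φ w v) := by
    simpa [Function.comp_def] using
      (hsupp.fderiv (𝕜 := ℝ)).comp_left (g := fun L : _ →L[ℝ] ℝ => L v) (by simp)
  have hDsupp : HasCompactSupport D := by
    simpa [Function.comp_def] using
      (hF.fderiv (𝕜 := ℝ)).comp_left (g := fun L : _ →L[ℝ] ℝ => L v) (by simp)
  have hDabs : HasCompactSupport (fun z => |D z|) := by
    simpa [Function.comp_def] using hDsupp.comp_left (g := fun t : ℝ => |t|) abs_zero
  obtain ⟨M, hM⟩ := hDc.abs.bounded_above_of_compact_support hDabs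
  have hM0 : 0 ≤ M := le_trans (abs_nonneg _) (hM 0)
  set hh : ℕ → ℝ := fun k => 1 / (k + 1) with hhdef
  have hhpos : ∀ k, 0 < hh k := fun k => by positivity
  have hhle1 : ∀ k, hh k ≤ 1 := by
    intro k
    rw [hhdef]
    rw [div_le_one (by positivity)]
    linarith [Nat.cast_nonneg (α := ℝ) k]
  set F : ℕ → EuclideanSpace ℝ (Fin n) → ℝ := fun k y =>
    g y * ((φ (y + hh k • v) - 2 * φ y + φ (y - hh k • v)) / (hh k) ^ 2) with hFdef
  -- representation of the difference quotient via the second derivative along the line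
  have rep : ∀ (k : ℕ) (y : EuclideanSpace ℝ (Fin n)), ∃ ξ₁ ξ₂ : ℝ,
      |ξ₁| ≤ hh k ∧ |ξ₂| ≤ hh k ∧
      (φ (y + hh k • v) - 2 * φ y + φ (y - hh k • v)) / (hh k) ^ 2 =
        (D (y + ξ₁ • v) + D (y + ξ₂ • v)) / 2 := by
    intro k y
    have hψ : ContDiff ℝ (⊤ : ℕ∞) (fun t : ℝ => φ (y + t • v)) := hφ'.comp (line_smooth y v)
    obtain ⟨ξ₁, ξ₂, h₁, h₂, he⟩ := taylor2_sym hψ (hhpos k)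
    refine ⟨ξ₁, ξ₂, h₁, h₂, ?_⟩
    rw [deriv2_line φ hφ' y v] at he
    simp only [zero_smul, add_zero, neg_smul, ← sub_eq_add_neg] at he
    exact he
  -- nonnegativity of each approximating integral
  have nonnegK : ∀ k, 0 ≤ ∫ y, F k y := by
    intro k
    have base := keyA n g φ hgc hg hφc hsupp hnonneg (hh k • v)
    have eq1 : ∫ y, F k y =
        ((hh k) ^ 2)⁻¹ * ∫ y, g y * (φ (y + hh k • v) - 2 * φ y + φ (y - hh k • v)) := by
      rw [← integral_const_mul]
      congr 1
      funext y
      simp only [hFdef]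
      rw [div_eq_inv_mul, mul_left_comm]
    rw [eq1]
    exact mul_nonneg (by positivity) base
  -- the dominating function
  set K : Set (EuclideanSpace ℝ (Fin n)) := Metric.cthickening ‖v‖ (tsupport φ) with hKdef
  have hKc : IsCompact K := hsupp.cthickening
  set bound : EuclideanSpace ℝ (Fin n) → ℝ := K.indicator (fun y => |g y| * M) with hbdef
  have bound_int : Integrable bound :=
    ((hgc.abs.mul continuous_const).continuousOn.integrableOn_compact hKc).integrable_indicator
      hKc.isClosed.measurableSet
  have mem_K : ∀ (y : EuclideanSpace ℝ (Fin n)) (t : ℝ), |t| ≤ 1 →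
      y + t • v ∈ tsupport φ → y ∈ K := by
    intro y t ht hy
    refine Metric.mem_cthickening_of_dist_le y (y + t • v) _ _ hy ?_
    rw [dist_eq_norm]
    have he : y - (y + t • v) = -(t • v) := by abel
    rw [he, norm_neg, norm_smul, Real.norm_eq_abs]
    calc |t| * ‖v‖ ≤ 1 * ‖v‖ := mul_le_mul_of_nonneg_right ht (norm_nonneg v)
    _ = ‖v‖ := one_mul _
  have hDbd : ∀ z, |D z| ≤ M := by
    intro z
    have := hM z
    rwa [Real.norm_eq_abs, abs_abs] at this
  have h_bound : ∀ k, ∀ᵐ y, ‖F k y‖ ≤ bound y := by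
    intro k
    refine Filter.Eventually.of_forall fun y => ?_
    by_cases hy : y ∈ K
    · rw [hbdef, Set.indicator_of_mem hy]
      obtain ⟨ξ₁, ξ₂, h₁, h₂, he⟩ := rep k y
      rw [hFdef]
      simp only [Real.norm_eq_abs, abs_mul]
      refine mul_le_mul_of_nonneg_left ?_ (abs_nonneg (g y))
      rw [he]
      have b1 := hDbd (y + ξ₁ • v)
      have b2 := hDbd (y + ξ₂ • v)
      calc |(D (y + ξ₁ • v) + D (y + ξ₂ • v)) / 2|
          ≤ (|D (y + ξ₁ • v)| + |D (y + ξ₂ • v)|) / 2 := by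
            rw [abs_div, abs_two]
            gcongr
            exact abs_add_le _ _
        _ ≤ M := by linarith
    · rw [hbdef, Set.indicator_of_notMem hy]
      have hy0 : φ y = 0 := by
        refine image_eq_zero_of_notMem_tsupport fun hmem => hy ?_
        exact Metric.self_subset_cthickening _ hmem
      have hyp : φ (y + hh k • v) = 0 := by
        refine image_eq_zero_of_notMem_tsupport fun hmem => hy ?_
        refine mem_K y (hh k) ?_ hmem
        rw [abs_of_pos (hhpos k)]; exact hhle1 k
      have hym : φ (y - hh k • v) = 0 := by
        refine image_eq_zero_of_notMem_tsupport fun hmem => hy ?_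
        have : y - hh k • v = y + (-(hh k)) • v := by rw [neg_smul, ← sub_eq_add_neg]
        rw [this] at hmem
        refine mem_K y (-(hh k)) ?_ hmem
        rw [abs_neg, abs_of_pos (hhpos k)]; exact hhle1 k
      rw [hFdef]
      simp [hy0, hyp, hym]
  have F_meas : ∀ k, AEStronglyMeasurable (F k) volume := by
    intro k
    refine Continuous.aestronglyMeasurable ?_
    rw [hFdef]
    fun_prop
  have h_lim : ∀ᵐ y, Filter.Tendsto (fun k => F k y) Filter.atTop (𝓝 (g y * D y)) := by
    refine Filter.Eventually.of_forall fun y => ?_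
    have hQ : Filter.Tendsto
        (fun k => (φ (y + hh k • v) - 2 * φ y + φ (y - hh k • v)) / (hh k) ^ 2)
        Filter.atTop (𝓝 (D y)) := by
      rw [Metric.tendsto_atTop]
      intro ε hε
      have hcont : Continuous fun t : ℝ => D (y + t • v) :=
        hDc.comp (continuous_const.add (continuous_id.smul continuous_const))
      have hca : ContinuousAt (fun t : ℝ => D (y + t • v)) 0 := hcont.continuousAt
      rw [Metric.continuousAt_iff] at hca
      obtain ⟨δ, hδ, hcd⟩ := hca (ε / 2) (by positivity)
      obtain ⟨N, hN⟩ := exists_nat_one_div_lt hδ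
      refine ⟨N, fun k hk => ?_⟩
      obtain ⟨ξ₁, ξ₂, h₁, h₂, he⟩ := rep k y
      have hhlt : hh k < δ := by
        calc hh k ≤ hh N := by
              rw [hhdef]
              exact one_div_le_one_div_of_le (by positivity) (by exact_mod_cast by linarith)
        _ < δ := hN
      have d1 : dist (D (y + ξ₁ • v)) (D (y + (0:ℝ) • v)) < ε / 2 := by
        refine hcd ?_
        rw [Real.dist_eq, sub_zero]
        exact lt_of_le_of_lt h₁ hhlt
      have d2 : dist (D (y + ξ₂ • v)) (D (y + (0:ℝ) • v)) < ε / 2 := by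
        refine hcd ?_
        rw [Real.dist_eq, sub_zero]
        exact lt_of_le_of_lt h₂ hhlt
      have hy0 : y + (0:ℝ) • v = y := by rw [zero_smul, add_zero]
      rw [hy0] at d1 d2
      rw [Real.dist_eq] at d1 d2 ⊢
      rw [he]
      have habs : |(D (y + ξ₁ • v) + D (y + ξ₂ • v)) / 2 - D y|
          = |((D (y + ξ₁ • v) - D y) + (D (y + ξ₂ • v) - D y)) / 2| := by
            congr 1
            ring
      rw [habs, abs_div]
      have := abs_add_le (D (y + ξ₁ • v) - D y) (D (y + ξ₂ • v) - D y)
      have h2 : |(2:ℝ)| = 2 := by norm_num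
      rw [h2]
      linarith
    have := hQ.const_mul (g y)
    simpa [hFdef] using this
  have tend := tendsto_integral_of_dominated_convergence bound F_meas bound_int h_bound h_lim
  exact ge_of_tendsto' tend nonnegK
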